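/- arXiv:1706.06497 — 11 statements merged into one kernel-verified Lean document; each statement's English description precedes it below -/
import Mathlib

section
/- Let G be an npeg and s ∈ Rel⁺(ℕ). Then the position operator distributes over all other constructs: s▹ε ~G ε; s▹(p q) ~G (s▹p)(s▹q); s▹(p / q) ~G (s▹p) / (s▹q); s▹(!p) ~G !(s▹p); s▹(p*) ~G (s▹p)*; s▹(r▷p) ~G r▷(s▹p); and s▹|p| ~G |s▹p|, for all parsing expressions p, q and all binary relations r on ℕ. -/
/-- Parsing expressions of an extended PEG (npeg) over non-terminals `N`
and terminals `T`. -/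
inductive Expr (N T : Type) : Type where
  | eps : Expr N T
  | term : T → Expr N T
  | nt : N → Expr N T
  | seq : Expr N T → Expr N T → Expr N T
  | choice : Expr N T → Expr N T → Expr N T
  | neg : Expr N T → Expr N T
  | star : Expr N T → Expr N T
  | ind : (ℕ → ℕ → Prop) → Expr N T → Expr N T
  | pos : (ℕ → ℕ → Prop) → Expr N T → Expr N T
  | aln : Expr N T → Expr N T

/-- An extended PEG: a production function and a start expression. -/
structure Npeg (N T : Type) where
  delta : N → Expr N T
  start : Expr N T

/-- Operation states: rest of input (terminals with their column numbers),
set of indentation baseline candidates, alignment flag. -/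
abbrev PState (T : Type) := List (T × ℕ) × Set ℕ × Bool

/-- Image of a set under a binary relation on ℕ. -/
def img (r : ℕ → ℕ → Prop) (Y : Set ℕ) : Set ℕ := {x | ∃ y ∈ Y, r y x}

/-- Inverse relation. -/
def inv (r : ℕ → ℕ → Prop) : ℕ → ℕ → Prop := fun x y => r y x

/-- `Rel⁺(ℕ)`: relations whose image of ℕ is all of ℕ. -/
def RelPlus (r : ℕ → ℕ → Prop) : Prop := img r Set.univ = Set.univ

/-- The parsing relation `G ⊢ e, t : σ ⇒ o`. -/
inductive Parse {N T : Type} (G : Npeg N T) :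
    Expr N T → (ℕ → ℕ → Prop) → PState T → Option (PState T) → Prop where
  | eps {t : ℕ → ℕ → Prop} {σ : PState T} : Parse G .eps t σ (some σ)
  | term_false {t : ℕ → ℕ → Prop} {a : T} {i : ℕ} {w' : List (T × ℕ)} {I : Set ℕ}
      (h : i ∈ img (inv t) I) :
      Parse G (.term a) t ((a, i) :: w', I, false) (some (w', I ∩ img t {i}, false))
  | term_true {t : ℕ → ℕ → Prop} {a : T} {i : ℕ} {w' : List (T × ℕ)} {I : Set ℕ}
      (h : i ∈ I) :
      Parse G (.term a) t ((a, i) :: w', I, true) (some (w', ({i} : Set ℕ), false))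
  | term_fail {t : ℕ → ℕ → Prop} {a : T} {w : List (T × ℕ)} {I : Set ℕ} {b : Bool}
      (h : ¬ ∃ i w', w = (a, i) :: w' ∧
        ((b = false ∧ i ∈ img (inv t) I) ∨ (b = true ∧ i ∈ I))) :
      Parse G (.term a) t (w, I, b) none
  | nt {t σ o} {x : N} (h : Parse G (G.delta x) t σ o) : Parse G (.nt x) t σ o
  | seq_ok {t σ σ' o p q} (h1 : Parse G p t σ (some σ')) (h2 : Parse G q t σ' o) :
      Parse G (.seq p q) t σ o
  | seq_fail {t σ p q} (h : Parse G p t σ none) : Parse G (.seq p q) t σ none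
  | choice_ok {t σ σ' p q} (h : Parse G p t σ (some σ')) :
      Parse G (.choice p q) t σ (some σ')
  | choice_snd {t σ o p q} (h1 : Parse G p t σ none) (h2 : Parse G q t σ o) :
      Parse G (.choice p q) t σ o
  | neg_ok {t σ p} (h : Parse G p t σ none) : Parse G (.neg p) t σ (some σ)
  | neg_fail {t σ σ' p} (h : Parse G p t σ (some σ')) : Parse G (.neg p) t σ none
  | star_end {t σ p} (h : Parse G p t σ none) : Parse G (.star p) t σ (some σ)
  | star_step {t σ σ' o p} (h1 : Parse G p t σ (some σ'))
      (h2 : Parse G (.star p) t σ' o) : Parse G (.star p) t σ o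
  | ind_ok {t r p} {w : List (T × ℕ)} {I : Set ℕ} {b : Bool}
      {w' : List (T × ℕ)} {I' : Set ℕ} {b' : Bool}
      (h : Parse G p t (w, img (inv r) I, b) (some (w', I', b'))) :
      Parse G (.ind r p) t (w, I, b) (some (w', I ∩ img r I', b'))
  | ind_fail {t r p} {w : List (T × ℕ)} {I : Set ℕ} {b : Bool}
      (h : Parse G p t (w, img (inv r) I, b) none) :
      Parse G (.ind r p) t (w, I, b) none
  | pos {t s σ o p} (h : Parse G p s σ o) : Parse G (.pos s p) t σ o
  | aln_ok {t p} {w : List (T × ℕ)} {I : Set ℕ} {b : Bool}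
      {w' : List (T × ℕ)} {I' : Set ℕ} {b' : Bool}
      (h : Parse G p t (w, I, true) (some (w', I', b'))) :
      Parse G (.aln p) t (w, I, b) (some (w', I', b && b'))
  | aln_fail {t p} {w : List (T × ℕ)} {I : Set ℕ} {b : Bool}
      (h : Parse G p t (w, I, true) none) :
      Parse G (.aln p) t (w, I, b) none

/-- Semantic equivalence of expressions in a grammar `G`. -/
def ExprEquiv {N T : Type} (G : Npeg N T) (p q : Expr N T) : Prop :=
  ∀ t : ℕ → ℕ → Prop, RelPlus t → ∀ (σ : PState T) (o : Option (PState T)),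
    Parse G p t σ o ↔ Parse G q t σ o


/-!
`s▹p` just runs `p` in token mode `s`, while every other construct hands its own token mode
unchanged to its subexpressions. So each construct is monotone in the parse relations of its
subexpressions (for `p*` by induction on the derivation), and applying this in both directions
to `Parse G (s▹p) t = Parse G p s` yields each law.
-/

theorem ExprEquiv.of_parse_eq {N T : Type} {G : Npeg N T} {p q : Expr N T}
    (h : ∀ t, Parse G p t = Parse G q t) : ExprEquiv G p q :=
  fun t _ σ o => by rw [h t]

namespace Parse

variable {N T : Type} {G : Npeg N T} {t t' : ℕ → ℕ → Prop} {p p' q q' : Expr N T}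

theorem pos_eq (s : ℕ → ℕ → Prop) : Parse G (.pos s p) t = Parse G p s := by
  ext σ o
  exact ⟨fun h => by cases h; assumption, pos⟩

theorem eps_mono : Parse G .eps t ≤ Parse G .eps t' := by
  rintro σ o ⟨⟩
  exact eps

theorem seq_mono (hp : Parse G p t ≤ Parse G p' t') (hq : Parse G q t ≤ Parse G q' t') :
    Parse G (.seq p q) t ≤ Parse G (.seq p' q') t' := by
  intro σ o h
  cases h with
  | seq_ok h₁ h₂ => exact seq_ok (hp _ _ h₁) (hq _ _ h₂)
  | seq_fail h => exact seq_fail (hp _ _ h)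

theorem choice_mono (hp : Parse G p t ≤ Parse G p' t') (hq : Parse G q t ≤ Parse G q' t') :
    Parse G (.choice p q) t ≤ Parse G (.choice p' q') t' := by
  intro σ o h
  cases h with
  | choice_ok h => exact choice_ok (hp _ _ h)
  | choice_snd h₁ h₂ => exact choice_snd (hp _ _ h₁) (hq _ _ h₂)

theorem neg_mono (hp : Parse G p t ≤ Parse G p' t') :
    Parse G (.neg p) t ≤ Parse G (.neg p') t' := by
  intro σ o h
  cases h with
  | neg_ok h => exact neg_ok (hp _ _ h)
  | neg_fail h => exact neg_fail (hp _ _ h)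

theorem star_mono (hp : Parse G p t ≤ Parse G p' t') :
    Parse G (.star p) t ≤ Parse G (.star p') t' := by
  intro σ o h
  generalize he : Expr.star p = e at h
  induction h with
  | star_end h => cases he; exact star_end (hp _ _ h)
  | star_step h₁ _ _ ih => cases he; exact star_step (hp _ _ h₁) (ih hp rfl)
  | _ => cases he

theorem ind_mono (r : ℕ → ℕ → Prop) (hp : Parse G p t ≤ Parse G p' t') :
    Parse G (.ind r p) t ≤ Parse G (.ind r p') t' := by
  intro σ o h
  cases h with
  | ind_ok h => exact ind_ok (hp _ _ h)
  | ind_fail h => exact ind_fail (hp _ _ h)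

theorem aln_mono (hp : Parse G p t ≤ Parse G p' t') :
    Parse G (.aln p) t ≤ Parse G (.aln p') t' := by
  intro σ o h
  cases h with
  | aln_ok h => exact aln_ok (hp _ _ h)
  | aln_fail h => exact aln_fail (hp _ _ h)

end Parse

theorem pos_distributes_general {N T : Type}
    (G : Npeg N T) (s : ℕ → ℕ → Prop) :
    ExprEquiv G (.pos s .eps) .eps ∧
    (∀ p q : Expr N T, ExprEquiv G (.pos s (.seq p q)) (.seq (.pos s p) (.pos s q))) ∧
    (∀ p q : Expr N T, ExprEquiv G (.pos s (.choice p q)) (.choice (.pos s p) (.pos s q))) ∧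
    (∀ p : Expr N T, ExprEquiv G (.pos s (.neg p)) (.neg (.pos s p))) ∧
    (∀ p : Expr N T, ExprEquiv G (.pos s (.star p)) (.star (.pos s p))) ∧
    (∀ (p : Expr N T) (r : ℕ → ℕ → Prop),
        ExprEquiv G (.pos s (.ind r p)) (.ind r (.pos s p))) ∧
    (∀ p : Expr N T, ExprEquiv G (.pos s (.aln p)) (.aln (.pos s p))) := by
  have le_pos {p : Expr N T} {t} : Parse G p s ≤ Parse G (.pos s p) t := (Parse.pos_eq s).ge
  have pos_le {p : Expr N T} {t} : Parse G (.pos s p) t ≤ Parse G p s := (Parse.pos_eq s).le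
  refine ⟨.of_parse_eq fun t => ?_, fun p q => .of_parse_eq fun t => ?_,
    fun p q => .of_parse_eq fun t => ?_, fun p => .of_parse_eq fun t => ?_,
    fun p => .of_parse_eq fun t => ?_, fun p r => .of_parse_eq fun t => ?_,
    fun p => .of_parse_eq fun t => ?_⟩ <;> rw [Parse.pos_eq]
  · exact le_antisymm Parse.eps_mono Parse.eps_mono
  · exact le_antisymm (Parse.seq_mono le_pos le_pos) (Parse.seq_mono pos_le pos_le)
  · exact le_antisymm (Parse.choice_mono le_pos le_pos) (Parse.choice_mono pos_le pos_le)
  · exact le_antisymm (Parse.neg_mono le_pos) (Parse.neg_mono pos_le)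
  · exact le_antisymm (Parse.star_mono le_pos) (Parse.star_mono pos_le)
  · exact le_antisymm (Parse.ind_mono r le_pos) (Parse.ind_mono r pos_le)
  · exact le_antisymm (Parse.aln_mono le_pos) (Parse.aln_mono pos_le)

/-- Distributivity of the position operator over all other constructs. -/
theorem pos_distributes {N T : Type} [Fintype N] [Fintype T]
    (G : Npeg N T) (s : ℕ → ℕ → Prop) (hs : RelPlus s) :
    ExprEquiv G (.pos s .eps) .eps ∧
    (∀ p q : Expr N T, ExprEquiv G (.pos s (.seq p q)) (.seq (.pos s p) (.pos s q))) ∧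
    (∀ p q : Expr N T, ExprEquiv G (.pos s (.choice p q)) (.choice (.pos s p) (.pos s q))) ∧
    (∀ p : Expr N T, ExprEquiv G (.pos s (.neg p)) (.neg (.pos s p))) ∧
    (∀ p : Expr N T, ExprEquiv G (.pos s (.star p)) (.star (.pos s p))) ∧
    (∀ (p : Expr N T) (r : ℕ → ℕ → Prop),
        ExprEquiv G (.pos s (.ind r p)) (.ind r (.pos s p))) ∧
    (∀ p : Expr N T, ExprEquiv G (.pos s (.aln p)) (.aln (.pos s p))) :=
  pos_distributes_general G s
end

section
/- Let G be an npeg and r ∈ Rel⁺(ℕ). Then: r▷ε ~G ε; r▷(p / q) ~G (r▷p) / (r▷q); r▷(!p) ~G !(r▷p); and r▷(s▹p) ~G s▹(r▷p), for all parsing expressions p, q and all binary relations s on ℕ. -/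
/-! Indentation `r▷p` runs `p` on the lowered candidate set `r⁻¹(I)` and lifts the result back
as `I ∩ r(I')`. For `r ∈ Rel⁺(ℕ)`, lowering and then lifting loses no candidate, so the
operators that leave the state unchanged (`ε`, and `!` on success) commute with `r▷`; `/` and
`s▹` commute with it for every `r`, because they only pass states and results through. -/

theorem inter_img_img_inv_of_relPlus {r : ℕ → ℕ → Prop} (hr : RelPlus r) (I : Set ℕ) :
    I ∩ img r (img (inv r) I) = I := by
  refine Set.Subset.antisymm Set.inter_subset_left fun i hi => ⟨hi, ?_⟩
  obtain ⟨y, -, hyi⟩ : i ∈ img r Set.univ := by rw [hr]; trivial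
  exact ⟨y, ⟨i, hi, hyi⟩, hyi⟩

section

variable {N T : Type} {G : Npeg N T} {r t : ℕ → ℕ → Prop} {w : List (T × ℕ)} {I : Set ℕ}
  {b : Bool}

theorem Parse.ind_of_lowered_unchanged (hr : RelPlus r) {p : Expr N T}
    (h : Parse G p t (w, img (inv r) I, b) (some (w, img (inv r) I, b))) :
    Parse G (.ind r p) t (w, I, b) (some (w, I, b)) := by
  simpa only [inter_img_img_inv_of_relPlus hr] using Parse.ind_ok h

theorem parse_ind_eps_iff (hr : RelPlus r) {σ : PState T} {o : Option (PState T)} :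
    Parse G (.ind r .eps) t σ o ↔ Parse G .eps t σ o := by
  obtain ⟨w, I, b⟩ := σ
  constructor
  · intro h
    cases h with
    | ind_ok h => cases h; rw [inter_img_img_inv_of_relPlus hr]; exact .eps
    | ind_fail h => cases h
  · rintro ⟨⟩
    exact .ind_of_lowered_unchanged hr .eps

theorem parse_ind_choice_iff {p q : Expr N T} {σ : PState T} {o : Option (PState T)} :
    Parse G (.ind r (.choice p q)) t σ o ↔ Parse G (.choice (.ind r p) (.ind r q)) t σ o := by
  obtain ⟨w, I, b⟩ := σ
  constructor
  · intro h
    cases h with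
    | ind_ok h =>
      cases h with
      | choice_ok hp => exact .choice_ok (.ind_ok hp)
      | choice_snd hp hq => exact .choice_snd (.ind_fail hp) (.ind_ok hq)
    | ind_fail h =>
      cases h with
      | choice_snd hp hq => exact .choice_snd (.ind_fail hp) (.ind_fail hq)
  · intro h
    cases h with
    | choice_ok h => cases h with | ind_ok hp => exact .ind_ok (.choice_ok hp)
    | choice_snd hp hq =>
      cases hp with
      | ind_fail hp =>
        cases hq with
        | ind_ok hq => exact .ind_ok (.choice_snd hp hq)
        | ind_fail hq => exact .ind_fail (.choice_snd hp hq)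

theorem parse_ind_neg_iff (hr : RelPlus r) {p : Expr N T} {σ : PState T}
    {o : Option (PState T)} :
    Parse G (.ind r (.neg p)) t σ o ↔ Parse G (.neg (.ind r p)) t σ o := by
  obtain ⟨w, I, b⟩ := σ
  constructor
  · intro h
    cases h with
    | ind_ok h =>
      cases h with
      | neg_ok hp => rw [inter_img_img_inv_of_relPlus hr]; exact .neg_ok (.ind_fail hp)
    | ind_fail h => cases h with | neg_fail hp => exact .neg_fail (.ind_ok hp)
  · intro h
    cases h with
    | neg_ok h => cases h with | ind_fail hp => exact .ind_of_lowered_unchanged hr (.neg_ok hp)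
    | neg_fail h => cases h with | ind_ok hp => exact .ind_fail (.neg_fail hp)

theorem parse_ind_pos_iff {p : Expr N T} {s : ℕ → ℕ → Prop} {σ : PState T}
    {o : Option (PState T)} :
    Parse G (.ind r (.pos s p)) t σ o ↔ Parse G (.pos s (.ind r p)) t σ o := by
  obtain ⟨w, I, b⟩ := σ
  constructor
  · intro h
    cases h with
    | ind_ok h => cases h with | pos hp => exact .pos (.ind_ok hp)
    | ind_fail h => cases h with | pos hp => exact .pos (.ind_fail hp)
  · intro h
    cases h with
    | pos h =>
      cases h with
      | ind_ok hp => exact .ind_ok (.pos hp)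
      | ind_fail hp => exact .ind_fail (.pos hp)

end

theorem ind_distributes_general {N T : Type}
    (G : Npeg N T) (r : ℕ → ℕ → Prop) (hr : RelPlus r) :
    ExprEquiv G (.ind r .eps) .eps ∧
    (∀ p q : Expr N T, ExprEquiv G (.ind r (.choice p q)) (.choice (.ind r p) (.ind r q))) ∧
    (∀ p : Expr N T, ExprEquiv G (.ind r (.neg p)) (.neg (.ind r p))) ∧
    (∀ (p : Expr N T) (s : ℕ → ℕ → Prop),
        ExprEquiv G (.ind r (.pos s p)) (.pos s (.ind r p))) :=
  ⟨fun _ _ _ _ => parse_ind_eps_iff hr,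
    fun _ _ _ _ _ _ => parse_ind_choice_iff,
    fun _ _ _ _ _ => parse_ind_neg_iff hr,
    fun _ _ _ _ _ _ => parse_ind_pos_iff⟩

/-- Distributivity of indentation over ε, choice, negation and position. -/
theorem ind_distributes {N T : Type} [Fintype N] [Fintype T]
    (G : Npeg N T) (r : ℕ → ℕ → Prop) (hr : RelPlus r) :
    ExprEquiv G (.ind r .eps) .eps ∧
    (∀ p q : Expr N T, ExprEquiv G (.ind r (.choice p q)) (.choice (.ind r p) (.ind r q))) ∧
    (∀ p : Expr N T, ExprEquiv G (.ind r (.neg p)) (.neg (.ind r p))) ∧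
    (∀ (p : Expr N T) (s : ℕ → ℕ → Prop),
        ExprEquiv G (.ind r (.pos s p)) (.pos s (.ind r p))) :=
  ind_distributes_general G r hr
end

section
/- Let G be an npeg. Then: |ε| ~G ε; |p / q| ~G |p| / |q|; |!p| ~G !|p|; and |s▹p| ~G s▹|p|, for all parsing expressions p, q and all binary relations s on ℕ. -/
namespace Parse

variable {N T : Type} {G : Npeg N T} {t : ℕ → ℕ → Prop} {p q : Expr N T} {σ σ' : PState T}
  {o : Option (PState T)}

theorem eps_iff : Parse G .eps t σ o ↔ o = some σ := by
  constructor
  · rintro ⟨⟩; rfl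
  · rintro rfl; exact .eps

theorem choice_none_iff :
    Parse G (.choice p q) t σ none ↔ Parse G p t σ none ∧ Parse G q t σ none := by
  constructor
  · intro h; cases h with | choice_snd hp hq => exact ⟨hp, hq⟩
  · exact fun ⟨hp, hq⟩ => .choice_snd hp hq

theorem choice_some_iff : Parse G (.choice p q) t σ (some σ') ↔
    Parse G p t σ (some σ') ∨ Parse G p t σ none ∧ Parse G q t σ (some σ') := by
  constructor
  · intro h
    cases h with
    | choice_ok hp => exact .inl hp
    | choice_snd hp hq => exact .inr ⟨hp, hq⟩
  · rintro (hp | ⟨hp, hq⟩)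
    exacts [.choice_ok hp, .choice_snd hp hq]

theorem neg_none_iff : Parse G (.neg p) t σ none ↔ ∃ σ', Parse G p t σ (some σ') := by
  constructor
  · intro h; cases h with | neg_fail hp => exact ⟨_, hp⟩
  · exact fun ⟨_, hp⟩ => .neg_fail hp

theorem neg_some_iff : Parse G (.neg p) t σ (some σ') ↔ Parse G p t σ none ∧ σ' = σ := by
  constructor
  · intro h; cases h with | neg_ok hp => exact ⟨hp, rfl⟩
  · rintro ⟨hp, rfl⟩; exact .neg_ok hp

theorem pos_iff {s : ℕ → ℕ → Prop} :
    Parse G (.pos s p) t σ o ↔ Parse G p s σ o :=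
  ⟨fun h => by cases h with | pos hp => exact hp, .pos⟩

theorem aln_none_iff {w : List (T × ℕ)} {I : Set ℕ} {b : Bool} :
    Parse G (.aln p) t (w, I, b) none ↔ Parse G p t (w, I, true) none := by
  constructor
  · intro h; cases h with | aln_fail hp => exact hp
  · exact .aln_fail

theorem aln_some_iff {w w' : List (T × ℕ)} {I I' : Set ℕ} {b b'' : Bool} :
    Parse G (.aln p) t (w, I, b) (some (w', I', b'')) ↔
      ∃ b', Parse G p t (w, I, true) (some (w', I', b')) ∧ b'' = (b && b') := by
  constructor
  · intro h; cases h with | aln_ok hp => exact ⟨_, hp, rfl⟩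
  · rintro ⟨b', hp, rfl⟩; exact .aln_ok hp

theorem exists_aln_some_iff {w : List (T × ℕ)} {I : Set ℕ} {b : Bool} :
    (∃ σ', Parse G (.aln p) t (w, I, b) (some σ')) ↔ ∃ σ', Parse G p t (w, I, true) (some σ') :=
  ⟨fun ⟨_, h⟩ => by cases h with | aln_ok hp => exact ⟨_, hp⟩, fun ⟨_, hp⟩ => ⟨_, .aln_ok hp⟩⟩

theorem aln_eps_iff : Parse G (.aln .eps) t σ o ↔ Parse G .eps t σ o := by
  obtain ⟨w, I, b⟩ := σ
  rcases o with _ | ⟨w', I', b''⟩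
  · simp [aln_none_iff, eps_iff]
  · simp [aln_some_iff, eps_iff, and_assoc]

theorem aln_choice_iff :
    Parse G (.aln (.choice p q)) t σ o ↔ Parse G (.choice (.aln p) (.aln q)) t σ o := by
  obtain ⟨w, I, b⟩ := σ
  rcases o with _ | ⟨w', I', b''⟩
  · simp only [aln_none_iff, choice_none_iff]
  · simp only [aln_some_iff, choice_some_iff, aln_none_iff, or_and_right, exists_or,
      and_assoc, exists_and_left]

theorem aln_neg_iff : Parse G (.aln (.neg p)) t σ o ↔ Parse G (.neg (.aln p)) t σ o := by
  obtain ⟨w, I, b⟩ := σ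
  rcases o with _ | ⟨w', I', b''⟩
  · rw [aln_none_iff, neg_none_iff, neg_none_iff, exists_aln_some_iff]
  · simp [aln_some_iff, neg_some_iff, aln_none_iff, and_assoc]

theorem aln_pos_iff {s : ℕ → ℕ → Prop} :
    Parse G (.aln (.pos s p)) t σ o ↔ Parse G (.pos s (.aln p)) t σ o := by
  obtain ⟨w, I, b⟩ := σ
  rcases o with _ | ⟨w', I', b''⟩
  · simp only [aln_none_iff, pos_iff]
  · simp only [aln_some_iff, pos_iff]

end Parse

theorem aln_distributes_general {N T : Type} (G : Npeg N T) :
    ExprEquiv G (.aln .eps) (.eps : Expr N T) ∧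
    (∀ p q : Expr N T, ExprEquiv G (.aln (.choice p q)) (.choice (.aln p) (.aln q))) ∧
    (∀ p : Expr N T, ExprEquiv G (.aln (.neg p)) (.neg (.aln p))) ∧
    (∀ (p : Expr N T) (s : ℕ → ℕ → Prop),
        ExprEquiv G (.aln (.pos s p)) (.pos s (.aln p))) :=
  ⟨fun _ _ _ _ => Parse.aln_eps_iff, fun _ _ _ _ _ _ => Parse.aln_choice_iff,
    fun _ _ _ _ _ => Parse.aln_neg_iff, fun _ _ _ _ _ _ => Parse.aln_pos_iff⟩

/-- Distributivity of alignment over ε, choice, negation and position. -/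
theorem aln_distributes {N T : Type} [Fintype N] [Fintype T] (G : Npeg N T) :
    ExprEquiv G (.aln .eps) (.eps : Expr N T) ∧
    (∀ p q : Expr N T, ExprEquiv G (.aln (.choice p q)) (.choice (.aln p) (.aln q))) ∧
    (∀ p : Expr N T, ExprEquiv G (.aln (.neg p)) (.neg (.aln p))) ∧
    (∀ (p : Expr N T) (s : ℕ → ℕ → Prop),
        ExprEquiv G (.aln (.pos s p)) (.pos s (.aln p))) :=
  aln_distributes_general G
end

section
/- Identity indentation law: Let G be an npeg and let id denote the identity relation on ℕ. Then id▷p ~G p for every parsing expression p. -/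
/-! Parsing never enlarges the set of indentation candidates, so the intersection
`I ∩ id(I')` that `id▷p` performs on the result of `p` gives back `I'` itself. -/

lemma img_id (Y : Set ℕ) : img (fun x y => x = y) Y = Y := by
  ext x; simp [img]

lemma inv_id : inv (fun x y : ℕ => x = y) = fun x y => x = y := by
  ext x y; exact eq_comm

theorem Parse.indents_subset {N T : Type} {G : Npeg N T} {e : Expr N T}
    {t : ℕ → ℕ → Prop} {σ : PState T} {o : Option (PState T)}
    (h : Parse G e t σ o) : ∀ σ' ∈ o, σ'.2.1 ⊆ σ.2.1 := by
  induction h with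
  | term_false => rintro _ ⟨⟩; exact Set.inter_subset_left
  | term_true hi => rintro _ ⟨⟩; exact Set.singleton_subset_iff.mpr hi
  | ind_ok => rintro _ ⟨⟩; exact Set.inter_subset_left
  | seq_ok _ _ ih₁ ih₂ | star_step _ _ ih₁ ih₂ =>
      exact fun σ' h => (ih₂ σ' h).trans (ih₁ _ rfl)
  | nt _ ih | choice_ok _ ih | choice_snd _ _ _ ih | pos _ ih => exact ih
  | aln_ok _ ih => rintro _ ⟨⟩; exact (ih _ rfl :)
  | eps | neg_ok | star_end => rintro _ ⟨⟩; rfl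
  | term_fail | seq_fail | neg_fail | ind_fail | aln_fail => rintro _ ⟨⟩

theorem ind_id_general {N T : Type} (G : Npeg N T) (p : Expr N T) :
    ExprEquiv G (.ind (fun x y => x = y) p) p := by
  rintro t - ⟨w, I, b⟩ o
  have hI : img (inv fun x y => x = y) I = I := by rw [inv_id, img_id]
  constructor
  · intro h
    cases h with
    | ind_ok h =>
        rw [hI] at h
        rwa [img_id, Set.inter_eq_right.mpr (h.indents_subset _ rfl)]
    | ind_fail h => rwa [hI] at h
  · intro h
    rcases o with _ | ⟨w', I', b'⟩
    · exact .ind_fail (by rwa [hI])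
    · have hsub := h.indents_subset _ rfl
      rw [← hI] at h
      have h' := Parse.ind_ok h
      rwa [img_id, Set.inter_eq_right.mpr hsub] at h'

/-- Identity indentation law: `id▷p ~G p`. -/
theorem ind_id {N T : Type} [Fintype N] [Fintype T] (G : Npeg N T) (p : Expr N T) :
    ExprEquiv G (.ind (fun x y => x = y) p) p :=
  ind_id_general G p
end

section
/- Distributivity of indentation and alignment: Let G be an npeg and r ∈ Rel⁺(ℕ). Then r▷|p| ~G |r▷p| for every parsing expression p. -/
/- Indentation changes only the set of baseline candidates and alignment only the flag, so
both sides run `p` on `(w, img (inv r) I, true)` and build the same result from its outcome. -/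

theorem ind_aln_comm_general {N T : Type} (G : Npeg N T)
    (r : ℕ → ℕ → Prop) (p : Expr N T) :
    ExprEquiv G (.ind r (.aln p)) (.aln (.ind r p)) := by
  rintro t - ⟨w, I, b⟩ o
  constructor
  · intro h
    cases h with
    | ind_ok h => cases h with | aln_ok h => exact .aln_ok (.ind_ok h)
    | ind_fail h => cases h with | aln_fail h => exact .aln_fail (.ind_fail h)
  · intro h
    cases h with
    | aln_ok h => cases h with | ind_ok h => exact .ind_ok (.aln_ok h)
    | aln_fail h => cases h with | ind_fail h => exact .ind_fail (.aln_fail h)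

/-- Distributivity of indentation and alignment: `r▷|p| ~G |r▷p|`. -/
theorem ind_aln_comm {N T : Type} [Fintype N] [Fintype T] (G : Npeg N T)
    (r : ℕ → ℕ → Prop) (hr : RelPlus r) (p : Expr N T) :
    ExprEquiv G (.ind r (.aln p)) (.aln (.ind r p)) :=
  ind_aln_comm_general G r p
end

section
/- Idempotence of alignment: Let G be an npeg. Then ||p|| ~G |p| for every parsing expression p, i.e., applying the alignment operator twice is semantically equivalent to applying it once. -/
def andFlag {T : Type} (b : Bool) : PState T → PState T
  | (w, I, b') => (w, I, b && b')

@[simp]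
lemma andFlag_true {T : Type} : (andFlag true : PState T → PState T) = id := by
  funext ⟨w, I, b⟩
  rfl

lemma parse_aln_iff {N T : Type} {G : Npeg N T} {p : Expr N T} {t : ℕ → ℕ → Prop}
    {w : List (T × ℕ)} {I : Set ℕ} {b : Bool} {o : Option (PState T)} :
    Parse G (.aln p) t (w, I, b) o ↔
      ∃ o', Parse G p t (w, I, true) o' ∧ o = o'.map (andFlag b) := by
  constructor
  · intro h
    cases h with
    | aln_ok h => exact ⟨_, h, rfl⟩
    | aln_fail h => exact ⟨none, h, rfl⟩
  · rintro ⟨(_ | ⟨w', I', b'⟩), h, rfl⟩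
    · exact .aln_fail h
    · exact .aln_ok h

theorem aln_idem_general {N T : Type} (G : Npeg N T) (p : Expr N T) :
    ExprEquiv G (.aln (.aln p)) (.aln p) := by
  rintro t - ⟨w, I, b⟩ o
  simp only [parse_aln_iff, andFlag_true, Option.map_id, id, exists_eq_right']

/-- Idempotence of alignment: `||p|| ~G |p|`. -/
theorem aln_idem {N T : Type} [Fintype N] [Fintype T] (G : Npeg N T) (p : Expr N T) :
    ExprEquiv G (.aln (.aln p)) (.aln p) :=
  aln_idem_general G p
end

section
/- Let G be an npeg and p, q parsing expressions. If for all t ∈ Rel⁺(ℕ) and all states σ, σ', G ⊢ p, t : σ ⇒ ⊤(σ') implies σ' = σ (i.e., every successful parse of p consumes no input and leaves the state unchanged), then |p q| ~G |p| |q|. -/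
def Parse.Stationary {N T : Type} (G : Npeg N T) (p : Expr N T) (t : ℕ → ℕ → Prop) : Prop :=
  ∀ σ σ' : PState T, Parse G p t σ (some σ') → σ' = σ

namespace Parse

variable {N T : Type} {G : Npeg N T} {p q : Expr N T} {t : ℕ → ℕ → Prop}

theorem aln_of_stationary {w : List (T × ℕ)} {I : Set ℕ} (b : Bool)
    (h : Parse G p t (w, I, true) (some (w, I, true))) :
    Parse G (.aln p) t (w, I, b) (some (w, I, b)) := by
  simpa using aln_ok (b := b) h

theorem seq_aln_of_aln_seq (hp : Stationary G p t) {σ : PState T} {o : Option (PState T)}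
    (h : Parse G (.aln (.seq p q)) t σ o) : Parse G (.seq (.aln p) (.aln q)) t σ o := by
  cases h with
  | aln_ok h =>
    cases h with
    | seq_ok hp' hq =>
      cases hp _ _ hp'
      exact seq_ok (aln_of_stationary _ hp') (aln_ok hq)
  | aln_fail h =>
    cases h with
    | seq_ok hp' hq =>
      cases hp _ _ hp'
      exact seq_ok (aln_of_stationary _ hp') (aln_fail hq)
    | seq_fail hp' => exact seq_fail (aln_fail hp')

theorem aln_seq_of_seq_aln (hp : Stationary G p t) {σ : PState T} {o : Option (PState T)}
    (h : Parse G (.seq (.aln p) (.aln q)) t σ o) : Parse G (.aln (.seq p q)) t σ o := by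
  cases h with
  | seq_ok h₁ h₂ =>
    cases h₁ with
    | aln_ok hp' =>
      cases hp _ _ hp'
      rw [Bool.and_true] at h₂
      cases h₂ with
      | aln_ok hq => exact aln_ok (seq_ok hp' hq)
      | aln_fail hq => exact aln_fail (seq_ok hp' hq)
  | seq_fail h =>
    cases h with
    | aln_fail hp' => exact aln_fail (seq_fail hp')

end Parse

theorem aln_seq_of_no_consume_general {N T : Type} (G : Npeg N T)
    (p q : Expr N T)
    (hp : ∀ t : ℕ → ℕ → Prop, RelPlus t → ∀ σ σ' : PState T,
        Parse G p t σ (some σ') → σ' = σ) :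
    ExprEquiv G (.aln (.seq p q)) (.seq (.aln p) (.aln q)) := fun t ht _ _ =>
  ⟨Parse.seq_aln_of_aln_seq (hp t ht), Parse.aln_seq_of_seq_aln (hp t ht)⟩

/-- If every successful parse of `p` leaves the state unchanged, then
`|p q| ~G |p| |q|`. -/
theorem aln_seq_of_no_consume {N T : Type} [Fintype N] [Fintype T] (G : Npeg N T)
    (p q : Expr N T)
    (hp : ∀ t : ℕ → ℕ → Prop, RelPlus t → ∀ σ σ' : PState T,
        Parse G p t σ (some σ') → σ' = σ) :
    ExprEquiv G (.aln (.seq p q)) (.seq (.aln p) (.aln q)) :=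
  aln_seq_of_no_consume_general G p q hp
end

section
/- Let G be an npeg, a ∈ Σ a terminal, s ∈ Rel⁺(ℕ), and let id denote the identity relation on ℕ. Then for every input string w, every I ⊆ ℕ, and every result o: G ⊢ s▹a, id : (w, I, false) ⇒ o if and only if G ⊢ s▷a, id : (w, I, false) ⇒ o. -/
theorem img_comp (r p : ℕ → ℕ → Prop) (J : Set ℕ) :
    img (Relation.Comp r p) J = img p (img r J) := by
  ext x
  simp only [img, Relation.Comp, Set.mem_ofPred_eq]
  constructor
  · rintro ⟨y, hy, z, hyz, hzx⟩
    exact ⟨z, ⟨y, hy, hyz⟩, hzx⟩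
  · rintro ⟨z, ⟨y, hy, hyz⟩, hzx⟩
    exact ⟨y, hy, z, hyz, hzx⟩

theorem inv_comp (r p : ℕ → ℕ → Prop) :
    inv (Relation.Comp r p) = Relation.Comp (inv p) (inv r) :=
  Relation.flip_comp

theorem inter_img_inter_img_inv (r : ℕ → ℕ → Prop) (I J : Set ℕ) :
    I ∩ img r (img (inv r) I ∩ J) = I ∩ img r J := by
  ext x
  simp only [img, inv, Set.mem_inter_iff, Set.mem_ofPred_eq]
  constructor
  · rintro ⟨hx, y, ⟨-, hy⟩, hyx⟩
    exact ⟨hx, y, hy, hyx⟩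
  · rintro ⟨hx, y, hy, hyx⟩
    exact ⟨hx, y, ⟨⟨x, hx, hyx⟩, hy⟩, hyx⟩

section
variable {N T : Type} (G : Npeg N T)

theorem parse_pos_iff {s t : ℕ → ℕ → Prop} {p : Expr N T} {σ : PState T}
    {o : Option (PState T)} : Parse G (.pos s p) t σ o ↔ Parse G p s σ o :=
  ⟨fun h => by cases h; assumption, .pos⟩

theorem parse_ind_term_iff {r t : ℕ → ℕ → Prop} {a : T} {w : List (T × ℕ)} {I : Set ℕ}
    {o : Option (PState T)} :
    Parse G (.ind r (.term a)) t (w, I, false) o ↔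
      Parse G (.term a) (Relation.Comp t r) (w, I, false) o := by
  have hinv : img (inv (Relation.Comp t r)) I = img (inv t) (img (inv r) I) := by
    rw [inv_comp, img_comp]
  have hout (i : ℕ) :
      I ∩ img r (img (inv r) I ∩ img t {i}) = I ∩ img (Relation.Comp t r) {i} := by
    rw [inter_img_inter_img_inv, img_comp]
  constructor
  · intro h
    cases h with
    | ind_ok h =>
      cases h with
      | term_false hi => rw [hout]; exact .term_false (hinv ▸ hi)
    | ind_fail h =>
      cases h with
      | term_fail h => exact .term_fail (by simpa [hinv] using h)
  · intro h
    cases h with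
    | term_false hi => rw [← hout]; exact .ind_ok (.term_false (hinv ▸ hi))
    | term_fail h => exact .ind_fail (.term_fail (by simpa [hinv] using h))

end

theorem pos_eq_ind_on_terminals_general {N T : Type} (G : Npeg N T)
    (a : T) (s : ℕ → ℕ → Prop) :
    ∀ (w : List (T × ℕ)) (I : Set ℕ) (o : Option (PState T)),
      Parse G (.pos s (.term a)) (fun x y => x = y) (w, I, false) o ↔
      Parse G (.ind s (.term a)) (fun x y => x = y) (w, I, false) o := by
  intro w I o
  rw [parse_pos_iff, parse_ind_term_iff, Relation.eq_comp]

/-- Position and indentation of terminals coincide when the alignment flag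
is false and the token mode is the identity relation. -/
theorem pos_eq_ind_on_terminals {N T : Type} [Fintype N] [Fintype T] (G : Npeg N T)
    (a : T) (s : ℕ → ℕ → Prop) (hs : RelPlus s) :
    ∀ (w : List (T × ℕ)) (I : Set ℕ) (o : Option (PState T)),
      Parse G (.pos s (.term a)) (fun x y => x = y) (w, I, false) o ↔
      Parse G (.ind s (.term a)) (fun x y => x = y) (w, I, false) o :=
  pos_eq_ind_on_terminals_general G a s
end

section
/- Termination for well-formed grammars under the strict semantics: Let G be a well-formed npeg and let e be a parsing expression all of whose subexpressions are well-formed. Then for every token mode t ∈ Rel⁺(ℕ) and every state σ, there exists a result o such that G ⊢! e, t : σ ⇒ o. -/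
/-- The approximation relation `G ⊨ e ⇝ n`, `n ∈ {-1,0,1}` (as integers). -/
inductive Appr {N T : Type} (G : Npeg N T) : Expr N T → ℤ → Prop where
  | eps : Appr G .eps 0
  | term_one {a : T} : Appr G (.term a) 1
  | term_neg {a : T} : Appr G (.term a) (-1)
  | nt {x : N} {n : ℤ} (h : Appr G (G.delta x) n) : Appr G (.nt x) n
  | seq_zero {p q} (h1 : Appr G p 0) (h2 : Appr G q 0) : Appr G (.seq p q) 0
  | seq_one {p q} {n' n'' : ℤ} (h1 : Appr G p n') (h2 : Appr G q n'')
      (hn' : n' = 0 ∨ n' = 1) (hn'' : n'' = 0 ∨ n'' = 1) (h : n' = 1 ∨ n'' = 1) :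
      Appr G (.seq p q) 1
  | seq_neg_right {p q} {n' : ℤ} (h1 : Appr G p n') (hn' : n' = 0 ∨ n' = 1)
      (h2 : Appr G q (-1)) : Appr G (.seq p q) (-1)
  | seq_neg_left {p q} (h : Appr G p (-1)) : Appr G (.seq p q) (-1)
  | choice_fst {p q} {n : ℤ} (h : Appr G p n) (hn : n = 0 ∨ n = 1) :
      Appr G (.choice p q) n
  | choice_snd {p q} {n : ℤ} (h1 : Appr G p (-1)) (h2 : Appr G q n) :
      Appr G (.choice p q) n
  | neg_zero {p} (h : Appr G p (-1)) : Appr G (.neg p) 0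
  | neg_neg {p} {n' : ℤ} (h : Appr G p n') (hn : n' = 0 ∨ n' = 1) :
      Appr G (.neg p) (-1)
  | star_zero {p} (h : Appr G p (-1)) : Appr G (.star p) 0
  | star_one {p} (h1 : Appr G p (-1)) (h2 : Appr G p 1) : Appr G (.star p) 1
  | ind {r p} {n : ℤ} (h : Appr G p n) : Appr G (.ind r p) n
  | pos {s p} {n : ℤ} (h : Appr G p n) : Appr G (.pos s p) n
  | aln {p} {n : ℤ} (h : Appr G p n) : Appr G (.aln p) n

/-- Well-formed expressions of a grammar `G`. -/
inductive WF {N T : Type} (G : Npeg N T) : Expr N T → Prop where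
  | eps : WF G .eps
  | term {a : T} : WF G (.term a)
  | nt {x : N} (h : WF G (G.delta x)) : WF G (.nt x)
  | seq {p q} (h1 : WF G p) (h2 : Appr G p 0 → WF G q) : WF G (.seq p q)
  | choice {p q} (h1 : WF G p) (h2 : Appr G p (-1) → WF G q) : WF G (.choice p q)
  | neg {p} (h : WF G p) : WF G (.neg p)
  | star {p} (h0 : ¬ Appr G p 0) (h : WF G p) : WF G (.star p)
  | ind {r p} (hr : RelPlus r) (h : WF G p) : WF G (.ind r p)
  | pos {s p} (hs : RelPlus s) (h : WF G p) : WF G (.pos s p)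
  | aln {p} (h : WF G p) : WF G (.aln p)

/-- `Subexpr e e'` : `e` occurs as a subexpression of `e'` (reflexively). -/
inductive Subexpr {N T : Type} : Expr N T → Expr N T → Prop where
  | refl {e} : Subexpr e e
  | seq_l {e p q} (h : Subexpr e p) : Subexpr e (.seq p q)
  | seq_r {e p q} (h : Subexpr e q) : Subexpr e (.seq p q)
  | choice_l {e p q} (h : Subexpr e p) : Subexpr e (.choice p q)
  | choice_r {e p q} (h : Subexpr e q) : Subexpr e (.choice p q)
  | neg {e p} (h : Subexpr e p) : Subexpr e (.neg p)
  | star {e p} (h : Subexpr e p) : Subexpr e (.star p)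
  | ind {e r p} (h : Subexpr e p) : Subexpr e (.ind r p)
  | pos {e s p} (h : Subexpr e p) : Subexpr e (.pos s p)
  | aln {e p} (h : Subexpr e p) : Subexpr e (.aln p)

/-- A grammar is well-formed if every subexpression of every production
right-hand side and of the start expression is well-formed. -/
def WellFormedGrammar {N T : Type} (G : Npeg N T) : Prop :=
  (∀ (x : N) (e : Expr N T), Subexpr e (G.delta x) → WF G e) ∧
  (∀ e : Expr N T, Subexpr e G.start → WF G e)

/-- The strict semantics `G ⊢! e, t : σ ⇒ o`: as `Parse`, except for the
choice clause. -/
inductive SParse {N T : Type} (G : Npeg N T) :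
    Expr N T → (ℕ → ℕ → Prop) → PState T → Option (PState T) → Prop where
  | eps {t : ℕ → ℕ → Prop} {σ : PState T} : SParse G .eps t σ (some σ)
  | term_false {t : ℕ → ℕ → Prop} {a : T} {i : ℕ} {w' : List (T × ℕ)} {I : Set ℕ}
      (h : i ∈ img (inv t) I) :
      SParse G (.term a) t ((a, i) :: w', I, false) (some (w', I ∩ img t {i}, false))
  | term_true {t : ℕ → ℕ → Prop} {a : T} {i : ℕ} {w' : List (T × ℕ)} {I : Set ℕ}
      (h : i ∈ I) :
      SParse G (.term a) t ((a, i) :: w', I, true) (some (w', ({i} : Set ℕ), false))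
  | term_fail {t : ℕ → ℕ → Prop} {a : T} {w : List (T × ℕ)} {I : Set ℕ} {b : Bool}
      (h : ¬ ∃ i w', w = (a, i) :: w' ∧
        ((b = false ∧ i ∈ img (inv t) I) ∨ (b = true ∧ i ∈ I))) :
      SParse G (.term a) t (w, I, b) none
  | nt {t σ o} {x : N} (h : SParse G (G.delta x) t σ o) : SParse G (.nt x) t σ o
  | seq_ok {t σ σ' o p q} (h1 : SParse G p t σ (some σ')) (h2 : SParse G q t σ' o) :
      SParse G (.seq p q) t σ o
  | seq_fail {t σ p q} (h : SParse G p t σ none) : SParse G (.seq p q) t σ none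
  | choice_ok {t σ σ' p q} {o' : Option (PState T)}
      (h : SParse G p t σ (some σ'))
      (h2 : Appr G p (-1) → SParse G q t σ o') :
      SParse G (.choice p q) t σ (some σ')
  | choice_snd {t σ o p q} (h1 : SParse G p t σ none) (h2 : SParse G q t σ o) :
      SParse G (.choice p q) t σ o
  | neg_ok {t σ p} (h : SParse G p t σ none) : SParse G (.neg p) t σ (some σ)
  | neg_fail {t σ σ' p} (h : SParse G p t σ (some σ')) : SParse G (.neg p) t σ none
  | star_end {t σ p} (h : SParse G p t σ none) : SParse G (.star p) t σ (some σ)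
  | star_step {t σ σ' o p} (h1 : SParse G p t σ (some σ'))
      (h2 : SParse G (.star p) t σ' o) : SParse G (.star p) t σ o
  | ind_ok {t r p} {w : List (T × ℕ)} {I : Set ℕ} {b : Bool}
      {w' : List (T × ℕ)} {I' : Set ℕ} {b' : Bool}
      (h : SParse G p t (w, img (inv r) I, b) (some (w', I', b'))) :
      SParse G (.ind r p) t (w, I, b) (some (w', I ∩ img r I', b'))
  | ind_fail {t r p} {w : List (T × ℕ)} {I : Set ℕ} {b : Bool}
      (h : SParse G p t (w, img (inv r) I, b) none) :
      SParse G (.ind r p) t (w, I, b) none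
  | pos {t s σ o p} (h : SParse G p s σ o) : SParse G (.pos s p) t σ o
  | aln_ok {t p} {w : List (T × ℕ)} {I : Set ℕ} {b : Bool}
      {w' : List (T × ℕ)} {I' : Set ℕ} {b' : Bool}
      (h : SParse G p t (w, I, true) (some (w', I', b'))) :
      SParse G (.aln p) t (w, I, b) (some (w', I', b && b'))
  | aln_fail {t p} {w : List (T × ℕ)} {I : Set ℕ} {b : Bool}
      (h : SParse G p t (w, I, true) none) :
      SParse G (.aln p) t (w, I, b) none

/-- An expression is an atom if it is ε, a terminal, or a non-terminal. -/
def AtomExpr {N T : Type} : Expr N T → Prop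
  | .eps => True
  | .term _ => True
  | .nt _ => True
  | _ => False

/-- A choice `p / q` is disjoint in `G` if parsing of `p` and of `q` cannot
both succeed in the same input state and token mode. -/
def DisjointChoice {N T : Type} (G : Npeg N T) (p q : Expr N T) : Prop :=
  ¬ ∃ t : ℕ → ℕ → Prop, RelPlus t ∧ ∃ (σ σ₁ σ₂ : PState T),
      Parse G p t σ (some σ₁) ∧ Parse G q t σ (some σ₂)

/-- `e₀` is repetition-free, has all its choices disjoint in `G`, and has
all its negations applied to atoms. -/
def GoodExpr {N T : Type} (G : Npeg N T) (e₀ : Expr N T) : Prop :=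
  ∀ e : Expr N T, Subexpr e e₀ →
    (∀ p, e ≠ Expr.star p) ∧
    (∀ p q, e = .choice p q → DisjointChoice G p q) ∧
    (∀ p, e = .neg p → AtomExpr p)

/-!
Strict parses are parses, and the approximation relation is sound for parses: a failure
witnesses `e ⇝ -1`, a success consuming no input `e ⇝ 0`, a success consuming input `e ⇝ 1`.
Termination follows by induction on the length of the input and, for a fixed length, on the
derivation of `WF G e`, which orders the recursion into subexpressions and productions. The
continuation of `p q` or `p*` runs on the same input only if `p` consumed nothing, so `p ⇝ 0`:
then `q` is well-formed, and `p*` is ruled out. The strict choice `p / q` runs `q` on the same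
input only if `p` failed or `p ⇝ -1`, and then `q` is well-formed.
-/

section

variable {N T : Type} {G : Npeg N T}

theorem SParse.toParse {e : Expr N T} {t : ℕ → ℕ → Prop} {σ : PState T}
    {o : Option (PState T)} (h : SParse G e t σ o) : Parse G e t σ o := by
  induction h with
  | choice_ok _ _ ih => exact .choice_ok ih
  | term_true h => exact .term_true h
  | term_fail h => exact .term_fail h
  | seq_fail _ ih => exact .seq_fail ih
  | _ => constructor <;> assumption

theorem Parse.length_le {e : Expr N T} {t : ℕ → ℕ → Prop} {σ : PState T}
    {o : Option (PState T)} (h : Parse G e t σ o) :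
    ∀ σ' ∈ o, σ'.1.length ≤ σ.1.length := by
  induction h with
  | seq_ok _ _ ih₁ ih₂ | star_step _ _ ih₁ ih₂ =>
    exact fun σ' h => (ih₂ σ' h).trans (ih₁ _ rfl)
  | _ => simp_all

def resultAppr (σ : PState T) : Option (PState T) → ℤ
  | none => -1
  | some σ' => if σ'.1.length < σ.1.length then 1 else 0

theorem resultAppr_some_eq_zero_or_one (σ σ' : PState T) :
    resultAppr σ (some σ') = 0 ∨ resultAppr σ (some σ') = 1 := by
  simp only [resultAppr]; split_ifs <;> simp

@[simp]
theorem resultAppr_some_self (σ : PState T) : resultAppr σ (some σ) = 0 := by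
  simp [resultAppr]

theorem Appr.neg_one_of_star {p : Expr N T} {n : ℤ} (h : Appr G (.star p) n) :
    Appr G p (-1) := by
  cases h <;> assumption

theorem Parse.appr {e : Expr N T} {t : ℕ → ℕ → Prop} {σ : PState T}
    {o : Option (PState T)} (h : Parse G e t σ o) : Appr G e (resultAppr σ o) := by
  induction h with
  | eps => simpa using Appr.eps
  | term_false | term_true => simpa [resultAppr] using Appr.term_one
  | term_fail => exact .term_neg
  | nt _ ih => exact .nt ih
  | @seq_ok _ σ₁ σ₂ o _ _ h₁ h₂ ih₁ ih₂ =>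
    rcases o with _ | σ₃
    · exact .seq_neg_right ih₁ (resultAppr_some_eq_zero_or_one _ _) ih₂
    · have l₁ := h₁.length_le _ rfl
      have l₂ := h₂.length_le _ rfl
      simp only [resultAppr] at *
      split_ifs at *
      all_goals first
        | omega
        | exact .seq_zero ih₁ ih₂
        | exact .seq_one ih₁ ih₂ (by simp) (by simp) (by simp)
  | seq_fail _ ih => exact .seq_neg_left ih
  | choice_ok _ ih => exact .choice_fst ih (resultAppr_some_eq_zero_or_one _ _)
  | choice_snd _ _ ih₁ ih₂ => exact .choice_snd ih₁ ih₂
  | neg_ok _ ih => simpa using Appr.neg_zero ih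
  | neg_fail _ ih => exact .neg_neg ih (resultAppr_some_eq_zero_or_one _ _)
  | star_end _ ih => simpa using Appr.star_zero ih
  | @star_step _ σ₁ σ₂ o p h₁ h₂ ih₁ ih₂ =>
    rcases o with _ | σ₃
    · cases ih₂
    · have hfail := ih₂.neg_one_of_star
      have l₁ := h₁.length_le _ rfl
      have l₂ := h₂.length_le _ rfl
      simp only [resultAppr] at *
      split_ifs at *
      all_goals first
        | omega
        | exact ih₂
        | exact .star_one hfail ih₁
  | ind_ok _ ih => exact .ind ih
  | ind_fail _ ih => exact .ind ih
  | pos _ ih => exact .pos ih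
  | aln_ok _ ih => exact .aln ih
  | aln_fail _ ih => exact .aln ih

theorem Parse.appr_zero_or_length_lt {e : Expr N T} {t : ℕ → ℕ → Prop} {σ σ' : PState T}
    (h : Parse G e t σ (some σ')) :
    (Appr G e 0 ∧ σ'.1.length = σ.1.length) ∨ σ'.1.length < σ.1.length := by
  have happr := h.appr
  have hle := h.length_le σ' rfl
  simp only [resultAppr] at happr
  split_ifs at happr with hlt
  · exact .inr hlt
  · exact .inl ⟨happr, by omega⟩

theorem SParse.exists_term (a : T) (t : ℕ → ℕ → Prop) (σ : PState T) :
    ∃ o, SParse G (.term a) t σ o := by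
  obtain ⟨w, I, b⟩ := σ
  by_cases h : ∃ i w', w = (a, i) :: w' ∧
      ((b = false ∧ i ∈ img (inv t) I) ∨ (b = true ∧ i ∈ I))
  · obtain ⟨i, w', rfl, ⟨rfl, hi⟩ | ⟨rfl, hi⟩⟩ := h
    · exact ⟨_, .term_false hi⟩
    · exact ⟨_, .term_true hi⟩
  · exact ⟨none, .term_fail h⟩

theorem SParse.exists_neg {p : Expr N T} {t : ℕ → ℕ → Prop} {σ : PState T}
    (h : ∃ o, SParse G p t σ o) : ∃ o, SParse G (.neg p) t σ o := by
  obtain ⟨_ | _, h⟩ := h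
  exacts [⟨_, .neg_ok h⟩, ⟨_, .neg_fail h⟩]

theorem SParse.exists_ind {r : ℕ → ℕ → Prop} {p : Expr N T} {t : ℕ → ℕ → Prop}
    {w : List (T × ℕ)} {I : Set ℕ} {b : Bool}
    (h : ∃ o, SParse G p t (w, img (inv r) I, b) o) :
    ∃ o, SParse G (.ind r p) t (w, I, b) o := by
  obtain ⟨_ | ⟨w', I', b'⟩, h⟩ := h
  exacts [⟨_, .ind_fail h⟩, ⟨_, .ind_ok h⟩]

theorem SParse.exists_aln {p : Expr N T} {t : ℕ → ℕ → Prop}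
    {w : List (T × ℕ)} {I : Set ℕ} {b : Bool}
    (h : ∃ o, SParse G p t (w, I, true) o) : ∃ o, SParse G (.aln p) t (w, I, b) o := by
  obtain ⟨_ | ⟨w', I', b'⟩, h⟩ := h
  exacts [⟨_, .aln_fail h⟩, ⟨_, .aln_ok h⟩]

theorem SParse.exists_of_forall_shorter
    (hδ : ∀ (x : N) (e : Expr N T), Subexpr e (G.delta x) → WF G e) {n : ℕ}
    (hshorter : ∀ e : Expr N T, (∀ e', Subexpr e' e → WF G e') →
      ∀ t (σ : PState T), σ.1.length < n → ∃ o, SParse G e t σ o)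
    {e : Expr N T} (hsub : ∀ e', Subexpr e' e → WF G e')
    (t : ℕ → ℕ → Prop) (σ : PState T) (hσ : σ.1.length = n) :
    ∃ o, SParse G e t σ o := by
  induction hsub e .refl generalizing t σ with
  | eps => exact ⟨_, .eps⟩
  | term => exact exists_term _ t σ
  | @nt x _ ih =>
    obtain ⟨o, h⟩ := ih (hδ x) t σ hσ
    exact ⟨o, .nt h⟩
  | @seq p q _ _ ihp ihq =>
    have hsubq e' (h : Subexpr e' q) := hsub e' (.seq_r h)
    obtain ⟨_ | σ', hp⟩ := ihp (fun e' h => hsub e' (.seq_l h)) t σ hσ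
    · exact ⟨_, .seq_fail hp⟩
    obtain ⟨o, hq⟩ : ∃ o, SParse G q t σ' o := by
      rcases hp.toParse.appr_zero_or_length_lt with ⟨h0, heq⟩ | hlt
      · exact ihq h0 hsubq t σ' (heq.trans hσ)
      · exact hshorter q hsubq t σ' (hσ ▸ hlt)
    exact ⟨o, .seq_ok hp hq⟩
  | @choice p q _ _ ihp ihq =>
    have hsubq e' (h : Subexpr e' q) := hsub e' (.choice_r h)
    obtain ⟨_ | σ', hp⟩ := ihp (fun e' h => hsub e' (.choice_l h)) t σ hσ
    · obtain ⟨o, hq⟩ := ihq hp.toParse.appr hsubq t σ hσ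
      exact ⟨o, .choice_snd hp hq⟩
    by_cases hfail : Appr G p (-1)
    · obtain ⟨o, hq⟩ := ihq hfail hsubq t σ hσ
      exact ⟨_, .choice_ok hp fun _ => hq⟩
    · exact ⟨_, .choice_ok (o' := none) hp fun h => absurd h hfail⟩
  | neg _ ih => exact SParse.exists_neg (ih (fun e' h => hsub e' (.neg h)) t σ hσ)
  | @star p h0 _ ih =>
    obtain ⟨_ | σ', hp⟩ := ih (fun e' h => hsub e' (.star h)) t σ hσ
    · exact ⟨_, .star_end hp⟩
    rcases hp.toParse.appr_zero_or_length_lt with ⟨happr, -⟩ | hlt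
    · exact absurd happr h0
    · obtain ⟨o, hstar⟩ := hshorter _ hsub t σ' (hσ ▸ hlt)
      exact ⟨o, .star_step hp hstar⟩
  | ind _ _ ih =>
    obtain ⟨w, I, b⟩ := σ
    exact SParse.exists_ind (ih (fun e' h => hsub e' (.ind h)) t _ hσ)
  | @pos s _ _ _ ih =>
    obtain ⟨o, h⟩ := ih (fun e' h => hsub e' (.pos h)) s σ hσ
    exact ⟨o, .pos h⟩
  | aln _ ih =>
    obtain ⟨w, I, b⟩ := σ
    exact SParse.exists_aln (ih (fun e' h => hsub e' (.aln h)) t _ hσ)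

theorem SParse.exists_of_forall_subexpr_wf
    (hδ : ∀ (x : N) (e : Expr N T), Subexpr e (G.delta x) → WF G e) {e : Expr N T}
    (he : ∀ e', Subexpr e' e → WF G e') (t : ℕ → ℕ → Prop) (σ : PState T) :
    ∃ o, SParse G e t σ o := by
  suffices ∀ n e, (∀ e', Subexpr e' e → WF G e') → ∀ t (σ : PState T),
      σ.1.length = n → ∃ o, SParse G e t σ o from this _ e he t σ rfl
  intro n
  induction n using Nat.strong_induction_on with
  | _ n ih =>
    exact fun e he t σ hσ => exists_of_forall_shorter hδ
      (fun e he t σ hlt => ih _ hlt e he t σ rfl) he t σ hσ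

end

theorem strict_terminates_general {N T : Type} (G : Npeg N T)
    (hG : WellFormedGrammar G) (e : Expr N T)
    (he : ∀ e' : Expr N T, Subexpr e' e → WF G e') :
    ∀ t : ℕ → ℕ → Prop, RelPlus t → ∀ σ : PState T,
      ∃ o : Option (PState T), SParse G e t σ o :=
  fun t _ σ => SParse.exists_of_forall_subexpr_wf hG.1 he t σ

/-- Termination for well-formed grammars under the strict semantics. -/
theorem strict_terminates {N T : Type} [Fintype N] [Fintype T] (G : Npeg N T)
    (hG : WellFormedGrammar G) (e : Expr N T)
    (he : ∀ e' : Expr N T, Subexpr e' e → WF G e') :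
    ∀ t : ℕ → ℕ → Prop, RelPlus t → ∀ σ : PState T,
      ∃ o : Option (PState T), SParse G e t σ o :=
  strict_terminates_general G hG e he
end

section
/- Let G₁ = (N, Σ, δ₁, s₁) and G₂ = (N, Σ, δ₂, s₂) be npegs over the same terminals and non-terminals. If δ₁(x) ~G₁ δ₂(x) for every x ∈ N, then for every parsing expression e, every token mode t ∈ Rel⁺(ℕ), every state σ, and every result o: G₂ ⊢ e, t : σ ⇒ o implies G₁ ⊢ e, t : σ ⇒ o. -/
namespace Parse

variable {N T : Type} {G : Npeg N T}

theorem suffix {e : Expr N T} {t σ o} (hp : Parse G e t σ o) : ∀ σ' ∈ o, σ'.1 <:+ σ.1 := by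
  induction hp with
  | eps | neg_ok | star_end => rintro _ ⟨⟩; exact List.suffix_refl _
  | term_false | term_true => rintro _ ⟨⟩; exact List.suffix_cons _ _
  | term_fail | seq_fail | neg_fail | ind_fail | aln_fail => rintro _ ⟨⟩
  | nt _ ih | choice_snd _ _ _ ih | pos _ ih => exact ih
  | choice_ok _ ih | ind_ok _ ih | aln_ok _ ih => rintro _ ⟨⟩; have := ih _ rfl; exact this
  | seq_ok _ _ ih₁ ih₂ | star_step _ _ ih₁ ih₂ =>
      exact fun σ' hσ' => (ih₂ σ' hσ').trans (ih₁ _ rfl)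

theorem of_mode_agreeOn {e : Expr N T} {t σ o} (hp : Parse G e t σ o) :
    ∀ t' : ℕ → ℕ → Prop, (∀ q ∈ σ.1, ∀ y, t q.2 y ↔ t' q.2 y) → Parse G e t' σ o := by
  induction hp with
  | eps => exact fun _ _ => .eps
  | @term_false t a i w' I hi =>
      intro t' hrow
      have hrow : ∀ y, t i y ↔ t' i y := hrow (a, i) List.mem_cons_self
      have himg : img t {i} = img t' {i} := by ext; simp [img, hrow]
      rw [himg]
      exact .term_false (by simpa [img, inv, hrow] using hi)
  | term_true hi => exact fun _ _ => .term_true hi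
  | @term_fail t a w I b hno =>
      intro t' hrow
      refine .term_fail ?_
      rintro ⟨i, w', rfl, hcase⟩
      have hrow : ∀ y, t i y ↔ t' i y := hrow (a, i) List.mem_cons_self
      exact hno ⟨i, w', rfl, by simpa [img, inv, hrow] using hcase⟩
  | nt _ ih => exact fun t' h => .nt (ih t' h)
  | seq_ok h₁ _ ih₁ ih₂ =>
      exact fun t' h => .seq_ok (ih₁ t' h)
        (ih₂ t' fun q hq => h q ((h₁.suffix _ rfl).subset hq))
  | seq_fail _ ih => exact fun t' h => .seq_fail (ih t' h)
  | choice_ok _ ih => exact fun t' h => .choice_ok (ih t' h)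
  | choice_snd _ _ ih₁ ih₂ => exact fun t' h => .choice_snd (ih₁ t' h) (ih₂ t' h)
  | neg_ok _ ih => exact fun t' h => .neg_ok (ih t' h)
  | neg_fail _ ih => exact fun t' h => .neg_fail (ih t' h)
  | star_end _ ih => exact fun t' h => .star_end (ih t' h)
  | star_step h₁ _ ih₁ ih₂ =>
      exact fun t' h => .star_step (ih₁ t' h)
        (ih₂ t' fun q hq => h q ((h₁.suffix _ rfl).subset hq))
  | ind_ok _ ih => exact fun t' h => .ind_ok (ih t' h)
  | ind_fail _ ih => exact fun t' h => .ind_fail (ih t' h)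
  | pos hp => exact fun _ _ => .pos hp
  | aln_ok _ ih => exact fun t' h => .aln_ok (ih t' h)
  | aln_fail _ ih => exact fun t' h => .aln_fail (ih t' h)

end Parse

section CompleteMode

variable {T : Type}

def completeMode (t : ℕ → ℕ → Prop) (w : List (T × ℕ)) : ℕ → ℕ → Prop :=
  fun i j => (∃ q ∈ w, q.2 = i) → t i j

theorem completeMode_agreeOn (t : ℕ → ℕ → Prop) (w : List (T × ℕ)) :
    ∀ q ∈ w, ∀ y, t q.2 y ↔ completeMode t w q.2 y :=
  fun q hq _ => ⟨fun h _ => h, fun h => h ⟨q, hq, rfl⟩⟩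

theorem relPlus_completeMode (t : ℕ → ℕ → Prop) (w : List (T × ℕ)) :
    RelPlus (completeMode t w) := by
  obtain ⟨i, hi⟩ := Infinite.exists_notMem_finset (w.map Prod.snd).toFinset
  refine Set.eq_univ_of_forall fun _ => ⟨i, Set.mem_univ _, ?_⟩
  rintro ⟨q, hq, rfl⟩
  exact (hi (List.mem_toFinset.mpr (List.mem_map_of_mem hq))).elim

end CompleteMode

theorem ExprEquiv.parse_iff {N T : Type} {G : Npeg N T} {p q : Expr N T}
    (h : ExprEquiv G p q) (t : ℕ → ℕ → Prop) (σ : PState T) (o : Option (PState T)) :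
    Parse G p t σ o ↔ Parse G q t σ o := by
  have hagree := completeMode_agreeOn t σ.1
  have transfer : ∀ e, Parse G e t σ o ↔ Parse G e (completeMode t σ.1) σ o := fun _ =>
    ⟨(·.of_mode_agreeOn _ hagree), (·.of_mode_agreeOn t fun q hq y => (hagree q hq y).symm)⟩
  rw [transfer, transfer]
  exact h _ (relPlus_completeMode t σ.1) σ o

theorem parse_of_equiv_productions_general {N T : Type}
    (G₁ G₂ : Npeg N T)
    (h : ∀ x : N, ExprEquiv G₁ (G₁.delta x) (G₂.delta x)) :
    ∀ (e : Expr N T) (t : ℕ → ℕ → Prop), RelPlus t →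
      ∀ (σ : PState T) (o : Option (PState T)),
        Parse G₂ e t σ o → Parse G₁ e t σ o := by
  rintro e t - σ o hp
  induction hp with
  | eps => exact .eps
  | term_false hi => exact .term_false hi
  | term_true hi => exact .term_true hi
  | term_fail hi => exact .term_fail hi
  | @nt t σ o x _ ih => exact .nt (((h x).parse_iff t σ o).mpr ih)
  | seq_ok _ _ ih₁ ih₂ => exact .seq_ok ih₁ ih₂
  | seq_fail _ ih => exact .seq_fail ih
  | choice_ok _ ih => exact .choice_ok ih
  | choice_snd _ _ ih₁ ih₂ => exact .choice_snd ih₁ ih₂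
  | neg_ok _ ih => exact .neg_ok ih
  | neg_fail _ ih => exact .neg_fail ih
  | star_end _ ih => exact .star_end ih
  | star_step _ _ ih₁ ih₂ => exact .star_step ih₁ ih₂
  | ind_ok _ ih => exact .ind_ok ih
  | ind_fail _ ih => exact .ind_fail ih
  | pos _ ih => exact .pos ih
  | aln_ok _ ih => exact .aln_ok ih
  | aln_fail _ ih => exact .aln_fail ih

/-- If the productions of `G₁` and `G₂` are pointwise semantically equivalent
in `G₁`, then any parsing result in `G₂` is also obtained in `G₁`. -/
theorem parse_of_equiv_productions {N T : Type} [Fintype N] [Fintype T]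
    (G₁ G₂ : Npeg N T)
    (h : ∀ x : N, ExprEquiv G₁ (G₁.delta x) (G₂.delta x)) :
    ∀ (e : Expr N T) (t : ℕ → ℕ → Prop), RelPlus t →
      ∀ (σ : PState T) (o : Option (PState T)),
        Parse G₂ e t σ o → Parse G₁ e t σ o :=
  parse_of_equiv_productions_general G₁ G₂ h
end

section
/- Closure under composition: Let (L, ∧) be a meet-semilattice with a greatest element ⊤, and let (α₁, γ₁) and (α₂, γ₂) be two pairs of self-maps of L such that, for each pair (α, γ), γ is monotone, γ(⊤) = ⊤, and x ∧ γ(y) ≤ γ(α(x) ∧ y) for all x, y ∈ L. Then: (i) for all x, z ∈ L, x ∧ γ₂(α₂(x) ∧ γ₁(z)) = x ∧ γ₂(γ₁(z)); and (ii) the pair (α₁ ∘ α₂, γ₂ ∘ γ₁) also satisfies the three conditions, i.e., γ₂ ∘ γ₁ is monotone, (γ₂ ∘ γ₁)(⊤) = ⊤, and x ∧ γ₂(γ₁(y)) ≤ γ₂(γ₁(α₁(α₂(x)) ∧ y)) for all x, y ∈ L. -/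
section AlphaGamma

variable {L : Type*} [SemilatticeInf L]

theorem inf_map_inf_eq_inf_map {α γ : L → L} (hγ : Monotone γ)
    (hax : ∀ x y : L, x ⊓ γ y ≤ γ (α x ⊓ y)) (x y : L) :
    x ⊓ γ (α x ⊓ y) = x ⊓ γ y :=
  le_antisymm (inf_le_inf_left x (hγ inf_le_right)) (le_inf inf_le_left (hax x y))

theorem inf_map_comp_le_map_comp_inf {α₁ γ₁ α₂ γ₂ : L → L}
    (h1ax : ∀ x y : L, x ⊓ γ₁ y ≤ γ₁ (α₁ x ⊓ y))
    (h2mono : Monotone γ₂) (h2ax : ∀ x y : L, x ⊓ γ₂ y ≤ γ₂ (α₂ x ⊓ y)) (x y : L) :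
    x ⊓ γ₂ (γ₁ y) ≤ γ₂ (γ₁ (α₁ (α₂ x) ⊓ y)) :=
  calc x ⊓ γ₂ (γ₁ y) ≤ γ₂ (α₂ x ⊓ γ₁ y) := h2ax x (γ₁ y)
    _ ≤ γ₂ (γ₁ (α₁ (α₂ x) ⊓ y)) := h2mono (h1ax (α₂ x) y)

end AlphaGamma

/-- Closure of the indentation/alignment axioms under composition. -/
theorem alpha_gamma_comp {L : Type*} [SemilatticeInf L] [OrderTop L]
    (α₁ γ₁ α₂ γ₂ : L → L)
    (h1mono : Monotone γ₁) (h1top : γ₁ ⊤ = ⊤)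
    (h1ax : ∀ x y : L, x ⊓ γ₁ y ≤ γ₁ (α₁ x ⊓ y))
    (h2mono : Monotone γ₂) (h2top : γ₂ ⊤ = ⊤)
    (h2ax : ∀ x y : L, x ⊓ γ₂ y ≤ γ₂ (α₂ x ⊓ y)) :
    (∀ x z : L, x ⊓ γ₂ (α₂ x ⊓ γ₁ z) = x ⊓ γ₂ (γ₁ z)) ∧
    (Monotone (γ₂ ∘ γ₁) ∧ (γ₂ ∘ γ₁) ⊤ = ⊤ ∧
      ∀ x y : L, x ⊓ γ₂ (γ₁ y) ≤ γ₂ (γ₁ (α₁ (α₂ x) ⊓ y))) :=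
  ⟨fun x z => inf_map_inf_eq_inf_map h2mono h2ax x (γ₁ z),
    h2mono.comp h1mono,
    by rw [Function.comp_apply, h1top, h2top],
    inf_map_comp_le_map_comp_inf h1ax h2mono h2ax⟩
end
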